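/- Let h : ℝ → ℝ be four times continuously differentiable in a neighborhood of x ∈ ℝ with h(x) ≠ 0. For Δx > 0 define the data-driven shape quantity η(Δx) = 2·(−h̄₋ + 2·h̄₀ − h̄₊)/(−h̄₋ + 5·h̄₀ + 2·h̄₊) (the denominator tends to 6·h(x) ≠ 0, so η is well-defined for all sufficiently small Δx). Then the adaptive k = 2 MQ-RBF reconstruction is third-order accurate with explicit leading term: (1/2 + η(Δx)/4)·(h̄₀ + h̄₊) = h(x) + (1/12)·h'''(x)·Δx³ + O(Δx⁴). -/

import Mathlib

/-!
Averaging the Peano form of Taylor's theorem over a cell `[x + a Δx, x + b Δx]` shows that each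
cell average equals the average of the cubic Taylor polynomial of `h` at `x` up to `O(Δx⁴)`.
Inserting these expansions, `-h̄₋ + 2h̄₀ - h̄₊ = 6q + O(Δx⁴)` with
`q = -h''(x)Δx²/6 + h'''(x)Δx³/12`, the denominator `D` of `η` is `6h(x) + O(Δx³)`, and
`h̄₀ + h̄₊ = 2h(x) + h''(x)Δx²/3 + O(Δx⁴)`. The `Δx²` term of `h̄₀ + h̄₊` is thus cancelled by the
`η` correction, and the rest of the error is `O(Δx⁴)` because `D → 6h(x) ≠ 0` keeps `1/D`
bounded.
-/

open Set Filter Topology Asymptotics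

noncomputable def cubicTaylor (f : ℝ → ℝ) (x ξ : ℝ) : ℝ :=
  f x + iteratedDeriv 1 f x * (ξ - x) + iteratedDeriv 2 f x / 2 * (ξ - x) ^ 2
    + iteratedDeriv 3 f x / 6 * (ξ - x) ^ 3

noncomputable def taylorCellAverage (c₀ c₁ c₂ c₃ a b d : ℝ) : ℝ :=
  c₀ * (b - a) + c₁ * (b ^ 2 - a ^ 2) / 2 * d + c₂ * (b ^ 3 - a ^ 3) / 6 * d ^ 2
    + c₃ * (b ^ 4 - a ^ 4) / 24 * d ^ 3

theorem ContDiffAt.isBigO_sub_cubicTaylor {f : ℝ → ℝ} {x : ℝ} (hf : ContDiffAt ℝ 4 f x) :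
    (fun ξ => f ξ - cubicTaylor f x ξ) =O[𝓝 x] fun ξ => (ξ - x) ^ 4 := by
  obtain ⟨u, hu, hfu⟩ := hf.contDiffOn le_rfl (by simp)
  obtain ⟨ε, hε, hball⟩ := Metric.mem_nhds_iff.1 hu
  have hx : x ∈ Metric.ball x ε := Metric.mem_ball_self hε
  have hlittleO := taylor_isLittleO (n := 4) (convex_ball x ε) hx (hfu.mono hball)
  rw [nhdsWithin_eq_nhds.2 (Metric.ball_mem_nhds x hε)] at hlittleO
  have htaylor : ∀ ξ, taylorWithinEval f 4 (Metric.ball x ε) x ξ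
      = cubicTaylor f x ξ + iteratedDeriv 4 f x / 24 * (ξ - x) ^ 4 := by
    intro ξ
    simp only [taylor_within_apply, Finset.sum_range_succ, Finset.sum_range_zero,
      iteratedDerivWithin_of_isOpen Metric.isOpen_ball hx, cubicTaylor, Nat.factorial,
      Nat.cast_one, inv_one, pow_zero, mul_one, iteratedDeriv_zero, smul_eq_mul, one_mul,
      zero_add, Nat.succ_eq_add_one, pow_one, iteratedDeriv_one, Nat.reduceAdd, Nat.cast_ofNat,
      Nat.reduceMul]
    ring
  refine (hlittleO.isBigO.add (isBigO_const_mul_self (iteratedDeriv 4 f x / 24) _ _)).congr_left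
    fun ξ => ?_
  rw [htaylor]
  ring

theorem eventually_uIcc_subset {s : Set ℝ} {x : ℝ} (hs : s ∈ 𝓝 x) (a b : ℝ) :
    ∀ᶠ d in 𝓝 0, uIcc (x + a * d) (x + b * d) ⊆ s := by
  obtain ⟨ε, hε, hball⟩ := Metric.mem_nhds_iff.1 hs
  rw [Real.ball_eq_Ioo] at hball
  have hend : ∀ c : ℝ, ∀ᶠ d in 𝓝 0, x + c * d ∈ Ioo (x - ε) (x + ε) := fun c =>
    (Continuous.tendsto' (by fun_prop) 0 x (by simp)).eventually
      (Ioo_mem_nhds (by linarith) (by linarith))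
  filter_upwards [hend a, hend b] with d ha hb
  exact (ordConnected_Ioo.uIcc_subset ha hb).trans hball

theorem abs_sub_le_of_mem_uIcc {x a b d ξ : ℝ} (hξ : ξ ∈ uIcc (x + a * d) (x + b * d)) :
    |ξ - x| ≤ (|a| + |b|) * |d| := by
  rw [add_mul, ← abs_mul, ← abs_mul]
  rcases mem_uIcc.1 hξ with ⟨h₁, h₂⟩ | ⟨h₁, h₂⟩ <;> rw [abs_le] <;> constructor <;>
    linarith [le_abs_self (a * d), neg_abs_le (a * d), le_abs_self (b * d), neg_abs_le (b * d)]

theorem Asymptotics.IsBigO.cellAverage {g : ℝ → ℝ} {x : ℝ} {n : ℕ}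
    (hg : g =O[𝓝 x] fun ξ => (ξ - x) ^ n) (a b : ℝ) :
    (fun d => (1 / d) * ∫ ξ in (x + a * d)..(x + b * d), g ξ) =O[𝓝 0] fun d => d ^ n := by
  obtain ⟨C, hC, hCg⟩ := hg.exists_pos
  refine IsBigO.of_bound (C * (|a| + |b|) ^ n * |b - a|) ?_
  filter_upwards [eventually_uIcc_subset hCg.bound a b] with d hcell
  have hbound : ∀ ξ ∈ uIoc (x + a * d) (x + b * d), ‖g ξ‖ ≤ C * ((|a| + |b|) * |d|) ^ n := by
    intro ξ hξ
    have hξ' := uIoc_subset_uIcc hξ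
    refine (hcell hξ').trans ?_
    rw [norm_pow, Real.norm_eq_abs]
    gcongr
    exact abs_sub_le_of_mem_uIcc hξ'
  have hint := intervalIntegral.norm_integral_le_of_norm_le_const hbound
  rcases eq_or_ne d 0 with rfl | hd
  · simp only [div_zero, zero_mul, norm_zero]
    positivity
  calc ‖(1 / d) * ∫ ξ in (x + a * d)..(x + b * d), g ξ‖
      ≤ |d|⁻¹ * (C * ((|a| + |b|) * |d|) ^ n * |x + b * d - (x + a * d)|) := by
        rw [norm_mul, norm_div, norm_one, Real.norm_eq_abs, one_div]
        gcongr
    _ = C * (|a| + |b|) ^ n * |b - a| * ‖d ^ n‖ := by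
        rw [show x + b * d - (x + a * d) = (b - a) * d by ring, abs_mul, norm_pow,
          Real.norm_eq_abs, mul_pow]
        field_simp

theorem cellAverage_cubicTaylor (f : ℝ → ℝ) (x a b : ℝ) {d : ℝ} (hd : d ≠ 0) :
    (1 / d) * ∫ ξ in (x + a * d)..(x + b * d), cubicTaylor f x ξ
      = taylorCellAverage (f x) (iteratedDeriv 1 f x) (iteratedDeriv 2 f x)
          (iteratedDeriv 3 f x) a b d := by
  set c₁ := iteratedDeriv 1 f x
  set c₂ := iteratedDeriv 2 f x
  set c₃ := iteratedDeriv 3 f x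
  have hprimitive : ∀ ξ, HasDerivAt (fun ξ => f x * ξ + c₁ / 2 * (ξ - x) ^ 2
      + c₂ / 6 * (ξ - x) ^ 3 + c₃ / 24 * (ξ - x) ^ 4) (cubicTaylor f x ξ) ξ := by
    intro ξ
    have hid : HasDerivAt (fun ξ : ℝ => ξ - x) 1 ξ := (hasDerivAt_id ξ).sub_const x
    refine ((((hasDerivAt_id ξ).const_mul (f x)).add ((hid.pow 2).const_mul (c₁ / 2))).add
      ((hid.pow 3).const_mul (c₂ / 6))).add ((hid.pow 4).const_mul (c₃ / 24)) |>.congr_deriv ?_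
    simp only [cubicTaylor, c₁, c₂, c₃]
    push_cast
    ring
  rw [intervalIntegral.integral_eq_sub_of_hasDerivAt (fun ξ _ => hprimitive ξ)
    (Continuous.intervalIntegrable (by unfold cubicTaylor; fun_prop) _ _), taylorCellAverage]
  field_simp
  ring

theorem ContDiffAt.cellAverage_sub_isBigO {f : ℝ → ℝ} {x : ℝ} (hf : ContDiffAt ℝ 4 f x)
    (a b : ℝ) :
    (fun d => (1 / d) * (∫ ξ in (x + a * d)..(x + b * d), f ξ)
        - taylorCellAverage (f x) (iteratedDeriv 1 f x) (iteratedDeriv 2 f x)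
            (iteratedDeriv 3 f x) a b d) =O[𝓝[≠] 0] fun d => d ^ 4 := by
  refine ((hf.isBigO_sub_cubicTaylor.cellAverage a b).mono nhdsWithin_le_nhds).congr' ?_
    EventuallyEq.rfl
  have hcont : ∀ᶠ ξ in 𝓝 x, ContinuousAt f ξ :=
    (hf.eventually (by simp)).mono fun _ h => h.continuousAt
  filter_upwards [self_mem_nhdsWithin,
    nhdsWithin_le_nhds (eventually_uIcc_subset hcont a b)] with d hd hcell
  have hfint : IntervalIntegrable f MeasureTheory.volume (x + a * d) (x + b * d) :=
    ContinuousOn.intervalIntegrable fun ξ hξ => (hcell hξ).continuousWithinAt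
  rw [intervalIntegral.integral_sub hfint
    (Continuous.intervalIntegrable (by unfold cubicTaylor; fun_prop) _ _), mul_sub,
    cellAverage_cubicTaylor f x a b hd]

theorem Asymptotics.IsBigO.mul_tendsto {α : Type*} {l : Filter α} {f g u : α → ℝ} {c : ℝ}
    (hf : f =O[l] g) (hu : Tendsto u l (𝓝 c)) : (fun t => f t * u t) =O[l] g := by
  simpa using hf.mul (hu.isBigO_one ℝ)

section AdaptiveStencil

variable {m z p : ℝ → ℝ} {c₀ c₁ c₂ c₃ : ℝ}

theorem tendsto_of_sub_taylorCellAverage_isBigO {a b : ℝ}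
    (hm : (fun d => m d - taylorCellAverage c₀ c₁ c₂ c₃ a b d) =O[𝓝[≠] 0] fun d => d ^ 4) :
    Tendsto m (𝓝[≠] 0) (𝓝 (c₀ * (b - a))) := by
  have hd4 : Tendsto (fun d : ℝ => d ^ 4) (𝓝[≠] 0) (𝓝 0) := by
    simpa using (continuous_pow (M := ℝ) 4).continuousWithinAt.tendsto (s := {0}ᶜ) (x := 0)
  have hT : Tendsto (taylorCellAverage c₀ c₁ c₂ c₃ a b) (𝓝[≠] 0) (𝓝 (c₀ * (b - a))) := by
    have hcont : Continuous (taylorCellAverage c₀ c₁ c₂ c₃ a b) := by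
      unfold taylorCellAverage; fun_prop
    simpa [taylorCellAverage] using hcont.continuousWithinAt.tendsto (s := {0}ᶜ) (x := 0)
  simpa using (hm.trans_tendsto hd4).add hT

theorem adaptiveReconstruction_sub_isBigO (hc₀ : c₀ ≠ 0)
    (hm : (fun d => m d - taylorCellAverage c₀ c₁ c₂ c₃ (-2) (-1) d) =O[𝓝[≠] 0] fun d => d ^ 4)
    (hz : (fun d => z d - taylorCellAverage c₀ c₁ c₂ c₃ (-1) 0 d) =O[𝓝[≠] 0] fun d => d ^ 4)
    (hp : (fun d => p d - taylorCellAverage c₀ c₁ c₂ c₃ 0 1 d) =O[𝓝[≠] 0] fun d => d ^ 4) :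
    (∀ᶠ d in 𝓝[≠] 0, -m d + 5 * z d + 2 * p d ≠ 0) ∧
    (fun d => (1 / 2 + 2 * (-m d + 2 * z d - p d) / (-m d + 5 * z d + 2 * p d) / 4)
        * (z d + p d) - c₀ - 1 / 12 * c₃ * d ^ 3) =O[𝓝[≠] 0] fun d => d ^ 4 := by
  have h6c₀ : 6 * c₀ ≠ 0 := mul_ne_zero (by norm_num) hc₀
  have hD : Tendsto (fun d => -m d + 5 * z d + 2 * p d) (𝓝[≠] 0) (𝓝 (6 * c₀)) := by
    convert ((tendsto_of_sub_taylorCellAverage_isBigO hm).neg.add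
      ((tendsto_of_sub_taylorCellAverage_isBigO hz).const_mul 5)).add
      ((tendsto_of_sub_taylorCellAverage_isBigO hp).const_mul 2) using 2
    ring
  have hS : Tendsto (fun d => z d + p d) (𝓝[≠] 0) (𝓝 (2 * c₀)) := by
    convert (tendsto_of_sub_taylorCellAverage_isBigO hz).add
      (tendsto_of_sub_taylorCellAverage_isBigO hp) using 2
    ring
  have hDne : ∀ᶠ d in 𝓝[≠] 0, -m d + 5 * z d + 2 * p d ≠ 0 := hD.eventually_ne h6c₀
  refine ⟨hDne, ?_⟩
  set q : ℝ → ℝ := fun d => -c₂ / 6 * d ^ 2 + c₃ / 12 * d ^ 3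
  have hq : Tendsto q (𝓝[≠] 0) (𝓝 0) := by
    simpa [q] using (show Continuous q by fun_prop).continuousWithinAt.tendsto (s := {0}ᶜ) (x := 0)
  have hqq : (fun d => q d * (2 * c₂ * d ^ 2 - c₃ * d ^ 3)) =O[𝓝[≠] 0] fun d => d ^ 4 := by
    have hcont : Continuous fun d : ℝ => (-c₂ / 6 + c₃ / 12 * d) * (2 * c₂ - c₃ * d) := by
      fun_prop
    refine ((isBigO_refl (fun d : ℝ => d ^ 4) _).mul_tendsto
      (hcont.continuousWithinAt.tendsto (s := {0}ᶜ) (x := 0))).congr_left fun d => ?_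
    ring
  have hrS := hz.add hp
  have hrD := (hm.neg_left.add (hz.const_mul_left 5)).add (hp.const_mul_left 2)
  have hrN := (hm.neg_left.add (hz.const_mul_left 2)).sub hp
  -- Writing `-m + 2z - p = 6q + r_N`, `S = z + p = 2c₀ + c₂d²/3 + r_S` and
  -- `D = -m + 5z + 2p = 6c₀ + c₃d³/2 + r_D` (remainders as in `hrN`, `hrS`, `hrD`), the error is
  -- `r_S/2 + (q (2c₂d² - c₃d³) + (6 r_S - 2 r_D) q + r_N S) / (2D)`.
  refine ((hrS.const_mul_left (1 / 2)).add ((((hqq.add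
    (((hrS.const_mul_left 6).sub (hrD.const_mul_left 2)).mul_tendsto hq)).add
    (hrN.mul_tendsto hS)).mul_tendsto (hD.inv₀ h6c₀)).const_mul_left (1 / 2))).congr'
    ?_ EventuallyEq.rfl
  filter_upwards [hDne] with d hd
  simp only [taylorCellAverage, q]
  linear_combination (c₂ / 6 * d ^ 2 - c₃ / 12 * d ^ 3) * mul_inv_cancel₀ hd

end AdaptiveStencil

theorem exists_pos_bound_of_isBigO_nhdsNE {f : ℝ → ℝ} {P : ℝ → Prop} {n : ℕ}
    (hP : ∀ᶠ d in 𝓝[≠] 0, P d) (hf : f =O[𝓝[≠] 0] fun d => d ^ n) :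
    ∃ C > 0, ∃ d₀ > 0, ∀ d : ℝ, 0 < d → d < d₀ → P d ∧ |f d| ≤ C * d ^ n := by
  obtain ⟨C, hC, hCf⟩ := hf.exists_pos
  obtain ⟨d₀, hd₀, hball⟩ := Metric.eventually_nhds_iff.1
    (eventually_nhdsWithin_iff.1 (hP.and hCf.bound))
  refine ⟨C, hC, d₀, hd₀, fun d hd hdd₀ => ?_⟩
  obtain ⟨hPd, hfd⟩ := hball (by rwa [Real.dist_0_eq_abs, abs_of_pos hd]) hd.ne'
  rw [Real.norm_eq_abs, norm_pow, Real.norm_of_nonneg hd.le] at hfd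
  exact ⟨hPd, hfd⟩

/-- The data-driven adaptive k = 2 MQ-RBF reconstruction, with
`η(Δx) = 2(−h̄₋ + 2h̄₀ − h̄₊)/(−h̄₋ + 5h̄₀ + 2h̄₊)`, is third-order accurate with
explicit leading term `(1/12)h'''(x)Δx³`. -/
theorem stmt_12 (h : ℝ → ℝ) (x : ℝ) (hh : ContDiffAt ℝ 4 h x) (hx : h x ≠ 0) :
    ∃ C > 0, ∃ d₀ > 0, ∀ d : ℝ, 0 < d → d < d₀ →
      -((1 / d) * ∫ ξ in (x - 2 * d)..(x - d), h ξ)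
          + 5 * ((1 / d) * ∫ ξ in (x - d)..x, h ξ)
          + 2 * ((1 / d) * ∫ ξ in x..(x + d), h ξ) ≠ 0 ∧
      |(1 / 2
            + 2 * (-((1 / d) * ∫ ξ in (x - 2 * d)..(x - d), h ξ)
                  + 2 * ((1 / d) * ∫ ξ in (x - d)..x, h ξ)
                  - (1 / d) * ∫ ξ in x..(x + d), h ξ)
                / (-((1 / d) * ∫ ξ in (x - 2 * d)..(x - d), h ξ)
                  + 5 * ((1 / d) * ∫ ξ in (x - d)..x, h ξ)
                  + 2 * ((1 / d) * ∫ ξ in x..(x + d), h ξ)) / 4)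
            * ((1 / d) * (∫ ξ in (x - d)..x, h ξ) + (1 / d) * ∫ ξ in x..(x + d), h ξ)
          - h x - (1 / 12) * iteratedDeriv 3 h x * d ^ 3|
        ≤ C * d ^ 4 := by
  have hm := hh.cellAverage_sub_isBigO (-2) (-1)
  have hz := hh.cellAverage_sub_isBigO (-1) 0
  have hp := hh.cellAverage_sub_isBigO 0 1
  simp only [neg_mul, one_mul, zero_mul, add_zero, ← sub_eq_add_neg] at hm hz hp
  obtain ⟨hD, hE⟩ := adaptiveReconstruction_sub_isBigO hx hm hz hp
  exact exists_pos_bound_of_isBigO_nhdsNE hD hE
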